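/- For every integer r ≥ 0, with P(r,i) the set of pairs (Z, f) where Z is a multiset of size r − i with elements in {1,…,r} and f : {1,…,i} → {1,…,r} such that for every k ∈ {1,…,r} one has (number of elements of Z that are ≤ k) + #{ j : f(j) ≤ k } ≥ k, the following identity holds: Σ_{i=0}^{r} binom(2r, i) · |P(r,i)| = C_r · (r+2)^r, where C_r = binom(2r,r)/(r+1) is the Catalan number. -/
import Mathlib

/-- `parkPairs r i` is the number of parking preference pairs `(Z, f)` where `Z` is a
multiset of size `r - i` with elements in `{1,…,r}` (motorcycle preferences) and
`f : {1,…,i} → {1,…,r}` (car preferences), such that for every `k ∈ {1,…,r}`, the number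
of elements of `Z` that are `≤ k` plus the number of `j` with `f j ≤ k` is at least `k`. -/
noncomputable def parkPairs (r i : ℕ) : ℕ :=
  Nat.card {p : Multiset ℕ × (Fin i → ℕ) //
    Multiset.card p.1 = r - i ∧ (∀ z ∈ p.1, 1 ≤ z ∧ z ≤ r) ∧
    (∀ j, 1 ≤ p.2 j ∧ p.2 j ≤ r) ∧
    (∀ k : ℕ, 1 ≤ k → k ≤ r →
      k ≤ Multiset.card (p.1.filter (fun z => z ≤ k)) +
          (Finset.univ.filter (fun j => p.2 j ≤ k)).card)}

namespace Stmt7aux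
open Multiset Finset

/-- cyclic shift on values in `[1,n]` -/
def sh (n c x : ℕ) : ℕ := (x - 1 + c) % n + 1

lemma sh_comp (n c d x : ℕ) : sh n c (sh n d x) = sh n (d + c) x := by
  simp [sh, Nat.add_assoc, Nat.mod_add_mod]

lemma sh_id {n x e : ℕ} (hx : 1 ≤ x) (hx2 : x ≤ n) (he : e % n = 0) : sh n e x = x := by
  have h1 : x - 1 < n := by omega
  simp [sh, Nat.add_mod, he, Nat.mod_eq_of_lt h1]
  omega

lemma sh_mem {n : ℕ} (hn : 0 < n) (c x : ℕ) : 1 ≤ sh n c x ∧ sh n c x ≤ n := by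
  have := Nat.mod_lt (x - 1 + c) hn
  simp [sh]; omega

lemma card_filter_le (m : Multiset ℕ) (h1 : ∀ x ∈ m, 1 ≤ x) (k : ℕ) :
    Multiset.card (m.filter (fun x => x ≤ k)) = ∑ j ∈ Finset.range k, m.count (j + 1) := by
  induction m using Multiset.induction with
  | empty => simp
  | cons a s ih =>
    have ha : 1 ≤ a := h1 a (mem_cons_self a s)
    have ih' := ih (fun x hx => h1 x (mem_cons_of_mem hx))
    rw [Multiset.filter_cons]
    rw [Multiset.card_add, ih']
    have hcnt : ∀ j : ℕ, (a ::ₘ s).count (j + 1) = s.count (j + 1) + if j = a - 1 then 1 else 0 := by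
      intro j
      rw [Multiset.count_cons]
      congr 1
      have h : (j + 1 = a) ↔ (j = a - 1) := by omega
      simp [h]
    simp only [hcnt, Finset.sum_add_distrib, Finset.sum_ite_eq' (Finset.range k) (a-1) (fun _ => 1)]
    have : (if a ≤ k then Multiset.card {a} else Multiset.card (0 : Multiset ℕ))
        = if a - 1 ∈ Finset.range k then 1 else 0 := by
      simp only [Multiset.card_singleton, Multiset.card_zero, Finset.mem_range]
      have h : (a ≤ k) ↔ (a - 1 < k) := by omega
      simp [h]
    rw [apply_ite Multiset.card, this]
    omega

/-- partial sums of counts, cyclically -/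
def Ssum (m : Multiset ℕ) (n t : ℕ) : ℕ := ∑ j ∈ Finset.range t, m.count (j % n + 1)

lemma Ssum_n {m : Multiset ℕ} {n : ℕ} (hb : ∀ x ∈ m, 1 ≤ x ∧ x ≤ n) :
    Ssum m n n = Multiset.card m := by
  have : Ssum m n n = ∑ j ∈ Finset.range n, m.count (j + 1) := by
    refine Finset.sum_congr rfl fun j hj => ?_
    rw [Nat.mod_eq_of_lt (Finset.mem_range.mp hj)]
  rw [this, ← card_filter_le m (fun x hx => (hb x hx).1)]
  congr 1
  rw [Multiset.filter_eq_self]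
  exact fun a ha => (hb a ha).2

lemma Ssum_add_n {m : Multiset ℕ} {n : ℕ} (hn : 0 < n) (hb : ∀ x ∈ m, 1 ≤ x ∧ x ≤ n) (t : ℕ) :
    Ssum m n (t + n) = Ssum m n t + Multiset.card m := by
  induction t with
  | zero => simpa [Ssum] using Ssum_n hb
  | succ t ih =>
    have h1 : t + 1 + n = (t + n) + 1 := by omega
    rw [h1, Ssum, Finset.sum_range_succ, ← Ssum, ih, Nat.add_mod_right]
    rw [Ssum, Ssum, Finset.sum_range_succ]
    omega

lemma count_map_sh {m : Multiset ℕ} {n : ℕ} (hn : 0 < n) (hb : ∀ x ∈ m, 1 ≤ x ∧ x ≤ n)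
    (c j : ℕ) (hj : j < n) :
    (m.map (sh n c)).count (j + 1) = m.count ((j + (n - c % n)) % n + 1) := by
  have hcd : (c + (n - c % n)) % n = 0 := by
    have h1 : c % n < n := Nat.mod_lt c hn
    have h2 : c % n ≤ c := Nat.mod_le c n
    have : c + (n - c % n) = n * (c / n) + n := by
      have := Nat.div_add_mod c n
      omega
    rw [this]
    simp [Nat.add_mul_mod_self_left, Nat.mul_mod_right]
  rw [Multiset.count_map]
  rw [Multiset.filter_congr (q := fun a => (j + (n - c % n)) % n + 1 = a)]
  · rw [← Multiset.count_eq_card_filter_eq]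
  · intro x hx
    have hx1 := (hb x hx).1
    have hx2 := (hb x hx).2
    constructor
    · intro h
      have : sh n (n - c % n) (j + 1) = sh n (n - c % n) (sh n c x) := by rw [← h]
      rw [sh_comp, sh_id hx1 hx2 hcd] at this
      rw [← this]
      simp [sh]
    · intro h
      have : x = sh n (n - c % n) (j + 1) := by simp [sh, ← h]
      rw [this, sh_comp]
      have : (n - c % n + c) % n = 0 := by rwa [Nat.add_comm] at hcd
      rw [sh_id (by omega) (by omega) this]

lemma filter_shift {m : Multiset ℕ} {n : ℕ} (hn : 0 < n) (hb : ∀ x ∈ m, 1 ≤ x ∧ x ≤ n)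
    (c k : ℕ) (hk : k ≤ n) :
    Ssum m n (n - c % n) + Multiset.card ((m.map (sh n c)).filter (fun x => x ≤ k))
      = Ssum m n ((n - c % n) + k) := by
  have hmap1 : ∀ x ∈ m.map (sh n c), 1 ≤ x := by
    intro x hx
    obtain ⟨a, _, rfl⟩ := Multiset.mem_map.mp hx
    exact (sh_mem hn c a).1
  rw [card_filter_le _ hmap1]
  conv_rhs => rw [Ssum, Finset.sum_range_add]
  rw [← Ssum]
  congr 1
  refine Finset.sum_congr rfl fun j hj => ?_
  have hj' : j < n := lt_of_lt_of_le (Finset.mem_range.mp hj) hk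
  rw [count_map_sh hn hb c j hj', Nat.add_comm j (n - c % n)]


section Cycle

variable {r : ℕ} {m : Multiset ℕ}

/-- parking condition for a multiset of size `r` -/
def ParkM (r : ℕ) (m : Multiset ℕ) : Prop :=
  ∀ k : ℕ, 1 ≤ k → k ≤ r → k ≤ Multiset.card (m.filter (fun x => x ≤ k))

/-- `Good` at starting point `t` -/
def Good (m : Multiset ℕ) (n r t : ℕ) : Prop :=
  ∀ k : ℕ, 1 ≤ k → k ≤ r → Ssum m n t + k ≤ Ssum m n (t + k)

lemma park_shift_iff (hb : ∀ x ∈ m, 1 ≤ x ∧ x ≤ r + 1) (c : ℕ) :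
    ParkM r (m.map (sh (r+1) c)) ↔ Good m (r+1) r ((r+1) - c % (r+1)) := by
  have hn : 0 < r + 1 := Nat.succ_pos r
  constructor
  · intro h k hk1 hk2
    have := filter_shift hn hb c k (by omega)
    have h2 := h k hk1 hk2
    omega
  · intro h k hk1 hk2
    have := filter_shift hn hb c k (by omega)
    have h2 := h k hk1 hk2
    omega

lemma map_sh_self (hb : ∀ x ∈ m, 1 ≤ x ∧ x ≤ r + 1) {e : ℕ} (he : e % (r+1) = 0) :
    m.map (sh (r+1) e) = m := by
  have : m.map (sh (r+1) e) = m.map id := by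
    apply Multiset.map_congr rfl
    intro x hx
    exact sh_id (hb x hx).1 (hb x hx).2 he
  simpa using this

lemma park_iff_good_n (hb : ∀ x ∈ m, 1 ≤ x ∧ x ≤ r + 1) :
    ParkM r m ↔ Good m (r+1) r (r+1) := by
  have h0 : (0 : ℕ) % (r+1) = 0 := Nat.zero_mod _
  have := park_shift_iff hb 0
  rw [map_sh_self hb h0] at this
  simpa using this

lemma good_exists_unique (hb : ∀ x ∈ m, 1 ≤ x ∧ x ≤ r + 1) (hcard : Multiset.card m = r) :
    ∃! t : ℕ, (1 ≤ t ∧ t ≤ r + 1) ∧ Good m (r+1) r t := by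
  set n := r + 1 with hn
  set P : ℕ → ℤ := fun t => (Ssum m n t : ℤ) - t with hP
  have hper : ∀ t, P (t + n) = P t - 1 := by
    intro t
    have := Ssum_add_n (by omega) hb t
    simp only [hP]
    rw [this, hcard]
    push_cast
    omega
  have hgoodP : ∀ t, Good m n r t ↔ ∀ k, 1 ≤ k → k ≤ r → P t ≤ P (t + k) := by
    intro t
    constructor
    · intro h k h1 h2
      have := h k h1 h2
      simp only [hP]
      push_cast
      omega
    · intro h k h1 h2
      have := h k h1 h2
      simp only [hP] at this
      push_cast at this
      omega
  -- existence of a minimizer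
  obtain ⟨t₀, ht₀mem, ht₀min⟩ := Finset.exists_min_image (Finset.Icc 1 n) P
    ⟨1, by simp [hn]⟩
  rw [Finset.mem_Icc] at ht₀mem
  have ht₀min' : ∀ s, 1 ≤ s → s ≤ n → P t₀ ≤ P s := by
    intro s h1 h2
    exact ht₀min s (Finset.mem_Icc.mpr ⟨h1, h2⟩)
  have hexQ : ∃ t, 1 ≤ t ∧ t ≤ n ∧ P t ≤ P t₀ := ⟨t₀, ht₀mem.1, ht₀mem.2, le_refl _⟩
  classical
  set t₁ := Nat.find hexQ with ht₁
  obtain ⟨ht₁1, ht₁n, ht₁le⟩ := Nat.find_spec hexQ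
  have ht₁min : P t₁ = P t₀ := le_antisymm ht₁le (ht₀min' t₁ ht₁1 ht₁n)
  have hlt : ∀ j, 1 ≤ j → j < t₁ → P t₀ < P j := by
    intro j h1 h2
    have hj : ¬ (1 ≤ j ∧ j ≤ n ∧ P j ≤ P t₀) := Nat.find_min hexQ h2
    have hjn : j ≤ n := by omega
    by_contra hcon
    push_neg at hcon
    exact hj ⟨h1, hjn, hcon⟩
  refine ⟨t₁, ⟨⟨ht₁1, ht₁n⟩, ?_⟩, ?_⟩
  · -- Good t₁
    rw [hgoodP]
    intro k h1 h2
    by_cases hc : t₁ + k ≤ n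
    · rw [ht₁min]
      exact ht₀min' (t₁ + k) (by omega) hc
    · have hj : t₁ + k = (t₁ + k - n) + n := by omega
      have h3 : P (t₁ + k) = P (t₁ + k - n) - 1 := by
        have := hper (t₁ + k - n); rw [← hj] at this; exact this
      have h4 : P t₀ < P (t₁ + k - n) := hlt _ (by omega) (by omega)
      rw [h3, ht₁min]
      omega
  · -- uniqueness
    rintro t' ⟨⟨h1', h2'⟩, hg'⟩
    by_contra hne
    have hg₁ : ∀ k, 1 ≤ k → k ≤ r → P t₁ ≤ P (t₁ + k) := by
      rw [← hgoodP]
      rw [hgoodP]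
      intro k hk1 hk2
      by_cases hc : t₁ + k ≤ n
      · rw [ht₁min]; exact ht₀min' (t₁ + k) (by omega) hc
      · have hj : t₁ + k = (t₁ + k - n) + n := by omega
        have h3 : P (t₁ + k) = P (t₁ + k - n) - 1 := by
          have := hper (t₁ + k - n); rw [← hj] at this; exact this
        have h4 : P t₀ < P (t₁ + k - n) := hlt _ (by omega) (by omega)
        rw [h3, ht₁min]; omega
    have hg'P : ∀ k, 1 ≤ k → k ≤ r → P t' ≤ P (t' + k) := (hgoodP t').mp hg'
    rcases Nat.lt_or_ge t₁ t' with h | h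
    · have hA : P t₁ ≤ P t' := by
        have := hg₁ (t' - t₁) (by omega) (by omega)
        rwa [show t₁ + (t' - t₁) = t' by omega] at this
      have hB : P t' ≤ P (t₁ + n) := by
        have := hg'P (t₁ + n - t') (by omega) (by omega)
        rwa [show t' + (t₁ + n - t') = t₁ + n by omega] at this
      have := hper t₁
      omega
    · have h' : t' < t₁ := by omega
      have hA : P t' ≤ P t₁ := by
        have := hg'P (t₁ - t') (by omega) (by omega)
        rwa [show t' + (t₁ - t') = t₁ by omega] at this
      have hB : P t₁ ≤ P (t' + n) := by
        have := hg₁ (t' + n - t₁) (by omega) (by omega)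
        rwa [show t₁ + (t' + n - t₁) = t' + n by omega] at this
      have := hper t'
      omega

lemma cycle_exists (hb : ∀ x ∈ m, 1 ≤ x ∧ x ≤ r + 1) (hcard : Multiset.card m = r) :
    ∃ c < r + 1, ParkM r (m.map (sh (r+1) c)) := by
  obtain ⟨t₁, ⟨⟨h1, h2⟩, hg⟩, _⟩ := good_exists_unique hb hcard
  refine ⟨(r + 1 - t₁) % (r+1), Nat.mod_lt _ (Nat.succ_pos r), ?_⟩
  rw [park_shift_iff hb]
  have : (r + 1) - ((r + 1 - t₁) % (r+1)) % (r+1) = t₁ := by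
    rcases Nat.eq_or_lt_of_le h2 with h | h
    · simp [← h]
    · have e1 : (r + 1 - t₁) % (r + 1) = r + 1 - t₁ := Nat.mod_eq_of_lt (by omega)
      rw [e1, e1]
      omega
  rwa [this]

lemma cycle_unique (hb : ∀ x ∈ m, 1 ≤ x ∧ x ≤ r + 1) (hcard : Multiset.card m = r)
    (e : ℕ) (h0 : ParkM r m) (he : ParkM r (m.map (sh (r+1) e))) : e % (r+1) = 0 := by
  obtain ⟨t₁, _, huniq⟩ := good_exists_unique hb hcard
  have hge : e % (r+1) < r + 1 := Nat.mod_lt _ (Nat.succ_pos r)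
  have h1 : (r+1 : ℕ) = t₁ :=
    huniq (r+1) ⟨⟨by omega, le_refl _⟩, (park_iff_good_n hb).mp h0⟩
  have h2 : (r+1) - e % (r+1) = t₁ :=
    huniq _ ⟨⟨by omega, by omega⟩, (park_shift_iff hb e).mp he⟩
  omega

end Cycle


section Pairs

variable {r i : ℕ}

def combined (i : ℕ) (p : Multiset ℕ × (Fin i → ℕ)) : Multiset ℕ :=
  p.1 + Multiset.map p.2 Finset.univ.val

lemma combined_card (p : Multiset ℕ × (Fin i → ℕ)) :
    Multiset.card (combined i p) = Multiset.card p.1 + i := by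
  simp [combined]

lemma combined_filter (p : Multiset ℕ × (Fin i → ℕ)) (k : ℕ) :
    Multiset.card ((combined i p).filter (fun x => x ≤ k))
      = Multiset.card (p.1.filter (fun z => z ≤ k))
        + (Finset.univ.filter (fun j => p.2 j ≤ k)).card := by
  rw [combined, Multiset.filter_add, Multiset.card_add]
  congr 1
  rw [Multiset.filter_map, Multiset.card_map]
  rfl

lemma combined_mem_bound {b : ℕ} (p : Multiset ℕ × (Fin i → ℕ))
    (h1 : ∀ z ∈ p.1, 1 ≤ z ∧ z ≤ b) (h2 : ∀ j, 1 ≤ p.2 j ∧ p.2 j ≤ b) :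
    ∀ x ∈ combined i p, 1 ≤ x ∧ x ≤ b := by
  intro x hx
  rw [combined, Multiset.mem_add] at hx
  rcases hx with hx | hx
  · exact h1 x hx
  · obtain ⟨j, _, rfl⟩ := Multiset.mem_map.mp hx
    exact h2 j

lemma combined_map (p : Multiset ℕ × (Fin i → ℕ)) (g : ℕ → ℕ) :
    combined i (p.1.map g, g ∘ p.2) = (combined i p).map g := by
  simp [combined, Multiset.map_add, Multiset.map_map, Function.comp_def]

lemma map_sh_sh {n a b : ℕ} (m : Multiset ℕ) :
    (m.map (sh n a)).map (sh n b) = m.map (sh n (a + b)) := by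
  rw [Multiset.map_map]
  exact Multiset.map_congr rfl (fun x _ => sh_comp n b a x)

lemma park_entries_le {m : Multiset ℕ} (hcard : Multiset.card m = r)
    (hpark : ParkM r m) : ∀ x ∈ m, x ≤ r := by
  rcases Nat.eq_zero_or_pos r with hr | hr
  · subst hr
    rw [Multiset.card_eq_zero] at hcard
    subst hcard
    simp
  · have h1 := hpark r hr (le_refl r)
    have h2 : m.filter (fun x => x ≤ r) = m := by
      apply Multiset.eq_of_le_of_card_le (Multiset.filter_le _ m)
      omega
    intro x hx
    rw [← h2] at hx
    exact (Multiset.mem_filter.mp hx).2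

/-- the parking subtype, exactly as in `parkPairs` -/
def PSet (r i : ℕ) := {p : Multiset ℕ × (Fin i → ℕ) //
    Multiset.card p.1 = r - i ∧ (∀ z ∈ p.1, 1 ≤ z ∧ z ≤ r) ∧
    (∀ j, 1 ≤ p.2 j ∧ p.2 j ≤ r) ∧
    (∀ k : ℕ, 1 ≤ k → k ≤ r →
      k ≤ Multiset.card (p.1.filter (fun z => z ≤ k)) +
          (Finset.univ.filter (fun j => p.2 j ≤ k)).card)}

/-- all pairs with entries bounded by `r+1` -/
def ASet (r i : ℕ) := {p : Multiset ℕ × (Fin i → ℕ) //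
    Multiset.card p.1 = r - i ∧ (∀ z ∈ p.1, 1 ≤ z ∧ z ≤ r + 1) ∧
    (∀ j, 1 ≤ p.2 j ∧ p.2 j ≤ r + 1)}

lemma pset_park (p : PSet r i) : ParkM r (combined i p.1) := by
  intro k h1 h2
  rw [combined_filter]
  exact p.2.2.2.2 k h1 h2

lemma pset_combined_card (hir : i ≤ r) (p : PSet r i) :
    Multiset.card (combined i p.1) = r := by
  rw [combined_card, p.2.1]
  omega

lemma pset_combined_bound (p : PSet r i) :
    ∀ x ∈ combined i p.1, 1 ≤ x ∧ x ≤ r + 1 := by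
  intro x hx
  have := combined_mem_bound p.1 p.2.2.1 p.2.2.2.1 x hx
  omega

def Phi (r i : ℕ) (q : PSet r i × Fin (r + 1)) : ASet r i :=
  ⟨(q.1.1.1.map (sh (r+1) q.2.val), sh (r+1) q.2.val ∘ q.1.1.2), by
    have hn : 0 < r + 1 := Nat.succ_pos r
    refine ⟨by simpa using q.1.2.1, ?_, ?_⟩
    · intro z hz
      obtain ⟨a, _, rfl⟩ := Multiset.mem_map.mp hz
      exact sh_mem hn _ a
    · intro j
      exact sh_mem hn _ _⟩

lemma Phi_bijective (hir : i ≤ r) : Function.Bijective (Phi r i) := by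
  have hn : 0 < r + 1 := Nat.succ_pos r
  constructor
  · rintro ⟨⟨⟨Z, f⟩, hp⟩, c⟩ ⟨⟨⟨Z', f'⟩, hp'⟩, c'⟩ heq
    have h1 : Z.map (sh (r+1) c.val) = Z'.map (sh (r+1) c'.val) := congrArg (fun q => q.1.1) heq
    have h2 : sh (r+1) c.val ∘ f = sh (r+1) c'.val ∘ f' := congrArg (fun q => q.1.2) heq
    -- combined multisets
    set m := combined i (Z, f) with hm
    set m' := combined i (Z', f') with hm'
    have hmb : ∀ x ∈ m, 1 ≤ x ∧ x ≤ r + 1 := pset_combined_bound ⟨(Z,f), hp⟩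
    have hm'b : ∀ x ∈ m', 1 ≤ x ∧ x ≤ r + 1 := pset_combined_bound ⟨(Z',f'), hp'⟩
    have hmc : Multiset.card m = r := pset_combined_card hir ⟨(Z,f), hp⟩
    have hcomb : m.map (sh (r+1) c.val) = m'.map (sh (r+1) c'.val) := by
      rw [hm, hm', ← combined_map, ← combined_map, h1, h2]
    have hkey : m' = m.map (sh (r+1) (c.val + (r + 1 - c'.val))) := by
      have e1 : (m'.map (sh (r+1) c'.val)).map (sh (r+1) (r + 1 - c'.val)) = m' := by
        rw [map_sh_sh]
        apply map_sh_self hm'b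
        have : c'.val + (r + 1 - c'.val) = r + 1 := by omega
        rw [this, Nat.mod_self]
      rw [← e1, ← hcomb, map_sh_sh]
    have hce : (c.val + (r + 1 - c'.val)) % (r + 1) = 0 := by
      apply cycle_unique hmb hmc
      · exact pset_park ⟨(Z,f), hp⟩
      · rw [← hkey]
        exact pset_park ⟨(Z',f'), hp'⟩
    have hcc : c = c' := by
      have hcv : c.val < r + 1 := c.isLt
      have hcv' : c'.val < r + 1 := c'.isLt
      have h3 : c.val + (r + 1 - c'.val) < 2 * (r + 1) := by omega
      have h4 : 1 ≤ c.val + (r + 1 - c'.val) := by omega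
      have h5 : c.val + (r + 1 - c'.val) = r + 1 := by
        rcases Nat.lt_or_ge (c.val + (r + 1 - c'.val)) (r+1) with h | h
        · rw [Nat.mod_eq_of_lt h] at hce; omega
        · have : c.val + (r + 1 - c'.val) - (r+1) < r + 1 := by omega
          rw [Nat.mod_eq_sub_mod h, Nat.mod_eq_of_lt this] at hce
          omega
      exact Fin.ext (by omega)
    subst hcc
    have hZ : Z = Z' := by
      have e1 := congrArg (Multiset.map (sh (r+1) (r + 1 - c.val))) h1
      rw [map_sh_sh, map_sh_sh] at e1
      have hmod : (c.val + (r + 1 - c.val)) % (r+1) = 0 := by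
        have : c.val + (r + 1 - c.val) = r + 1 := by omega
        rw [this, Nat.mod_self]
      rwa [map_sh_self (fun z hz => by have := hp.2.1 z hz; omega) hmod,
        map_sh_self (fun z hz => by have := hp'.2.1 z hz; omega) hmod] at e1
    have hf : f = f' := by
      funext j
      have e1 : sh (r+1) c.val (f j) = sh (r+1) c.val (f' j) := congrFun h2 j
      have e2 := congrArg (sh (r+1) (r + 1 - c.val)) e1
      rw [sh_comp, sh_comp] at e2
      have hmod : (c.val + (r + 1 - c.val)) % (r+1) = 0 := by
        have : c.val + (r + 1 - c.val) = r + 1 := by omega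
        rw [this, Nat.mod_self]
      have b1 := hp.2.2.1 j
      have b2 := hp'.2.2.1 j
      rwa [sh_id b1.1 (by omega) hmod, sh_id b2.1 (by omega) hmod] at e2
    subst hZ; subst hf
    simp
  · rintro ⟨⟨Z, f⟩, hq⟩
    set m := combined i (Z, f) with hm
    have hmb : ∀ x ∈ m, 1 ≤ x ∧ x ≤ r + 1 := combined_mem_bound (Z, f) hq.2.1 hq.2.2
    have hmc : Multiset.card m = r := by
      rw [hm, combined_card, hq.1]; omega
    obtain ⟨c, hc, hpark⟩ := cycle_exists hmb hmc
    have hshift : (combined i (Z.map (sh (r+1) c), sh (r+1) c ∘ f)) = m.map (sh (r+1) c) :=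
      combined_map (Z, f) _
    have hparkc : ParkM r (combined i (Z.map (sh (r+1) c), sh (r+1) c ∘ f)) := by
      rwa [hshift]
    have hccard : Multiset.card (combined i (Z.map (sh (r+1) c), sh (r+1) c ∘ f)) = r := by
      rw [hshift]; simp [hmc]
    have hle := park_entries_le hccard hparkc
    have hZbound : ∀ z ∈ Z.map (sh (r+1) c), 1 ≤ z ∧ z ≤ r := by
      intro z hz
      obtain ⟨a, _, rfl⟩ := Multiset.mem_map.mp hz
      refine ⟨(sh_mem hn c a).1, hle _ ?_⟩
      rw [combined, Multiset.mem_add]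
      left
      exact Multiset.mem_map_of_mem _ ‹a ∈ Z›
    have hfbound : ∀ j, 1 ≤ (sh (r+1) c ∘ f) j ∧ (sh (r+1) c ∘ f) j ≤ r := by
      intro j
      refine ⟨(sh_mem hn c (f j)).1, hle _ ?_⟩
      rw [combined, Multiset.mem_add]
      right
      exact Multiset.mem_map.mpr ⟨j, by simp, rfl⟩
    have hparkcond : ∀ k : ℕ, 1 ≤ k → k ≤ r →
        k ≤ Multiset.card ((Z.map (sh (r+1) c)).filter (fun z => z ≤ k)) +
            (Finset.univ.filter (fun j => (sh (r+1) c ∘ f) j ≤ k)).card := by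
      intro k h1 h2
      have := hparkc k h1 h2
      rwa [combined_filter] at this
    refine ⟨⟨⟨(Z.map (sh (r+1) c), sh (r+1) c ∘ f),
      ⟨by simpa using hq.1, hZbound, hfbound, hparkcond⟩⟩,
      ⟨(r + 1 - c) % (r+1), Nat.mod_lt _ hn⟩⟩, ?_⟩
    have hmod : (c + (r + 1 - c) % (r + 1)) % (r+1) = 0 := by
      rcases Nat.eq_zero_or_pos c with h | h
      · subst h; simp
      · have e1 : (r + 1 - c) % (r + 1) = r + 1 - c := Nat.mod_eq_of_lt (by omega)
        have e2 : c + (r + 1 - c) = r + 1 := by omega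
        rw [e1, e2, Nat.mod_self]
    apply Subtype.ext
    show (_, _) = (Z, f)
    refine Prod.ext ?_ ?_
    · show (Z.map (sh (r+1) c)).map (sh (r+1) ((r + 1 - c) % (r+1))) = Z
      rw [map_sh_sh]
      exact map_sh_self (fun z hz => hq.2.1 z hz) hmod
    · show sh (r+1) ((r + 1 - c) % (r+1)) ∘ (sh (r+1) c ∘ f) = f
      funext j
      show sh (r+1) ((r + 1 - c) % (r+1)) (sh (r+1) c (f j)) = f j
      rw [sh_comp]
      exact sh_id (hq.2.2 j).1 (hq.2.2 j).2 hmod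

end Pairs



section Count

variable {r i : ℕ}

def finEquiv (n : ℕ) (hn : 0 < n) : {x : ℕ // 1 ≤ x ∧ x ≤ n} ≃ Fin n where
  toFun x := ⟨x.1 - 1, by have := x.2; omega⟩
  invFun v := ⟨v.1 + 1, by have := v.isLt; omega⟩
  left_inv x := Subtype.ext (by have := x.2; simp; omega)
  right_inv v := Fin.ext (by simp)

def msetEquiv (n m : ℕ) (hn : 0 < n) :
    {Z : Multiset ℕ // Multiset.card Z = m ∧ ∀ z ∈ Z, 1 ≤ z ∧ z ≤ n} ≃ Sym (Fin n) m where
  toFun Z := ⟨Z.1.map (fun x => (⟨(x - 1) % n, Nat.mod_lt _ hn⟩ : Fin n)), by simp [Z.2.1]⟩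
  invFun s := ⟨s.1.map (fun v => v.val + 1), by
      refine ⟨by simp [s.2], ?_⟩
      intro z hz
      obtain ⟨v, _, rfl⟩ := Multiset.mem_map.mp hz
      have := v.isLt
      omega⟩
  left_inv Z := by
    apply Subtype.ext
    show (Z.1.map _).map _ = Z.1
    rw [Multiset.map_map]
    have h : ∀ x ∈ Z.1, ((fun v : Fin n => v.val + 1) ∘
        (fun x => (⟨(x - 1) % n, Nat.mod_lt _ hn⟩ : Fin n))) x = id x := by
      intro x hx
      have hb := Z.2.2 x hx
      have h1 : x - 1 < n := by omega
      simp [Function.comp, Nat.mod_eq_of_lt h1]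
      omega
    rw [Multiset.map_congr rfl h, Multiset.map_id]
  right_inv s := by
    apply Subtype.ext
    show (s.1.map _).map _ = s.1
    rw [Multiset.map_map]
    have h : ∀ v ∈ s.1, ((fun x => (⟨(x - 1) % n, Nat.mod_lt _ hn⟩ : Fin n)) ∘
        (fun v : Fin n => v.val + 1)) v = id v := by
      intro v _
      apply Fin.ext
      simp [Function.comp, Nat.mod_eq_of_lt v.isLt]
    rw [Multiset.map_congr rfl h, Multiset.map_id]

def funEquiv (n i : ℕ) (hn : 0 < n) :
    {f : Fin i → ℕ // ∀ j, 1 ≤ f j ∧ f j ≤ n} ≃ (Fin i → Fin n) :=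
  (Equiv.subtypePiEquivPi (p := fun _ x => 1 ≤ x ∧ x ≤ n)).trans
    (Equiv.piCongrRight fun _ => finEquiv n hn)

def asetEquiv (r i : ℕ) :
    ASet r i ≃ Sym (Fin (r+1)) (r - i) × (Fin i → Fin (r+1)) :=
  ((Equiv.subtypeEquivRight (fun p => by
      constructor
      · rintro ⟨a, b, c⟩; exact ⟨⟨a, b⟩, c⟩
      · rintro ⟨⟨a, b⟩, c⟩; exact ⟨a, b, c⟩)).trans
    (Equiv.subtypeProdEquivProd
      (p := fun Z => Multiset.card Z = r - i ∧ ∀ z ∈ Z, 1 ≤ z ∧ z ≤ r + 1)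
      (q := fun f => ∀ j, 1 ≤ f j ∧ f j ≤ r + 1))).trans
    ((msetEquiv (r+1) (r-i) (Nat.succ_pos r)).prodCongr (funEquiv (r+1) i (Nat.succ_pos r)))

lemma aset_card (r i : ℕ) :
    Nat.card (ASet r i) = Nat.multichoose (r+1) (r - i) * (r+1) ^ i := by
  rw [Nat.card_congr (asetEquiv r i), Nat.card_prod]
  congr 1
  · rw [Nat.card_eq_fintype_card, Sym.card_sym_eq_multichoose, Fintype.card_fin]
  · rw [Nat.card_eq_fintype_card, Fintype.card_fun, Fintype.card_fin, Fintype.card_fin]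

lemma pset_card_mul (hir : i ≤ r) :
    Nat.card (PSet r i) * (r + 1) = Nat.multichoose (r+1) (r - i) * (r+1) ^ i := by
  have h := Nat.card_eq_of_bijective _ (Phi_bijective hir)
  rw [Nat.card_prod, Nat.card_eq_fintype_card (α := Fin (r+1)), Fintype.card_fin,
    aset_card] at h
  exact h

end Count

lemma parkPairs_mul (r i : ℕ) (hir : i ≤ r) :
    parkPairs r i * (r + 1) = (2 * r - i).choose (r - i) * (r + 1) ^ i := by
  have hps : parkPairs r i = Nat.card (PSet r i) := rfl
  rw [hps]
  have h := pset_card_mul hir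
  rw [Nat.multichoose_eq] at h
  have e : r + 1 + (r - i) - 1 = 2 * r - i := by omega
  rw [e] at h
  exact h

lemma trinom (r i : ℕ) (h : i ≤ r) :
    (2 * r).choose i * (2 * r - i).choose (r - i) = (2 * r).choose r * r.choose i := by
  have h1 : (2 * r).choose i * i.factorial * (2 * r - i).factorial = (2 * r).factorial :=
    Nat.choose_mul_factorial_mul_factorial (by omega)
  have h2 : (2 * r - i).choose (r - i) * (r - i).factorial * ((2 * r - i) - (r - i)).factorial
      = (2 * r - i).factorial := Nat.choose_mul_factorial_mul_factorial (by omega)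
  have h3 : (2 * r).choose r * r.factorial * (2 * r - r).factorial = (2 * r).factorial :=
    Nat.choose_mul_factorial_mul_factorial (by omega)
  have h4 : r.choose i * i.factorial * (r - i).factorial = r.factorial :=
    Nat.choose_mul_factorial_mul_factorial h
  have e1 : (2 * r - i) - (r - i) = r := by omega
  have e2 : 2 * r - r = r := by omega
  rw [e1] at h2
  rw [e2] at h3
  have hpos : 0 < i.factorial * (r - i).factorial * r.factorial :=
    Nat.mul_pos (Nat.mul_pos i.factorial_pos (r - i).factorial_pos) r.factorial_pos
  apply Nat.eq_of_mul_eq_mul_right hpos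
  calc (2 * r).choose i * (2 * r - i).choose (r - i) * (i.factorial * (r - i).factorial * r.factorial)
      = ((2 * r).choose i * i.factorial) * ((2 * r - i).choose (r - i) * (r - i).factorial * r.factorial) := by ring
    _ = ((2 * r).choose i * i.factorial) * (2 * r - i).factorial := by rw [h2]
    _ = (2 * r).factorial := by rw [← h1]
    _ = (2 * r).choose r * r.factorial * r.factorial := by rw [h3]
    _ = (2 * r).choose r * (r.choose i * i.factorial * (r - i).factorial) * r.factorial := by rw [h4]
    _ = (2 * r).choose r * r.choose i * (i.factorial * (r - i).factorial * r.factorial) := by ring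

end Stmt7aux

theorem stmt7 (r : ℕ) :
    ∑ i ∈ Finset.range (r + 1), Nat.choose (2 * r) i * parkPairs r i =
      catalan r * (r + 2) ^ r := by
  apply Nat.eq_of_mul_eq_mul_right (show 0 < r + 1 from Nat.succ_pos r)
  rw [Finset.sum_mul]
  have hsum : ∑ i ∈ Finset.range (r + 1), (2 * r).choose i * parkPairs r i * (r + 1)
      = ∑ i ∈ Finset.range (r + 1), (2 * r).choose r * ((r + 1) ^ i * 1 ^ (r - i) * r.choose i) := by
    refine Finset.sum_congr rfl fun i hi => ?_
    have hir : i ≤ r := by have := Finset.mem_range.mp hi; omega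
    rw [mul_assoc, Stmt7aux.parkPairs_mul r i hir, ← mul_assoc,
      Stmt7aux.trinom r i hir]
    ring
  have h4 := add_pow (r + 1) (1 : ℕ) r
  simp only [Nat.cast_id] at h4
  rw [hsum, ← Finset.mul_sum, ← h4]
  have h2 : r + 1 + 1 = r + 2 := rfl
  rw [h2]
  have h3 : (2 * r).choose r = (r + 1) * catalan r := by
    rw [succ_mul_catalan_eq_centralBinom, Nat.centralBinom_eq_two_mul_choose]
  rw [h3]
  ring
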